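/- For every 0 ≤ j ≤ 4, one has the identity R_j(r_1, r_2, r_3, r_4) = C_{4,j}(η_1, ξ_1, η_2, ξ_2) · R_4(r_1, r_2, r_3, r_4) in the polynomial ring F_p[η_1, ξ_1, η_2, ξ_2]. In particular (j = 3): r_1^p r_4 + r_1 r_2^{p²} − r_2 r_3^p = C_{4,3} · (r_1^{p²+1} − r_2^{p+1} + r_1^p r_3). -/

import Mathlib

open MvPolynomial

/-- The polynomials `R_0, …, R_4 ∈ F_p[Y_1,Y_2,Y_3,Y_4]` (with `Y_i = X (i-1)`). -/
noncomputable def Rpoly (p : ℕ) : ℕ → MvPolynomial (Fin 4) (ZMod p)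
  | 0 => X 0 ^ (p ^ 3 + p) - X 1 ^ (p ^ 2 + p) + X 0 ^ p ^ 2 * X 2 ^ p
  | 1 => X 0 ^ p ^ 3 * X 1 - X 1 ^ p ^ 2 * X 2 + X 0 ^ p ^ 2 * X 3
  | 2 => X 0 ^ (p ^ 3 + 1) - X 2 ^ (p + 1) + X 1 ^ p * X 3
  | 3 => X 0 * X 1 ^ p ^ 2 - X 1 * X 2 ^ p + X 0 ^ p * X 3
  | _ => X 0 ^ (p ^ 2 + 1) - X 1 ^ (p + 1) + X 0 ^ p * X 2

/-- In `F_p[η_1, ξ_1, η_2, ξ_2]` (variables `X 0 = η_1`, `X 1 = ξ_1`, `X 2 = η_2`,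
`X 3 = ξ_2`), the element `r_i = ξ_1^{p^i} η_1 − ξ_1 η_1^{p^i} + ξ_2^{p^i} η_2 − ξ_2 η_2^{p^i}`. -/
noncomputable def rElt (p i : ℕ) : MvPolynomial (Fin 4) (ZMod p) :=
  X 1 ^ p ^ i * X 0 - X 1 * X 0 ^ p ^ i + X 3 ^ p ^ i * X 2 - X 3 * X 2 ^ p ^ i

/-- `f_4(X) = ∏_{(k_1,k_2,k_3,k_4) ∈ F_p^4} (X − (k_1 η_1 + k_2 ξ_1 + k_3 η_2 + k_4 ξ_2))`. -/
noncomputable def dicksonF4 (p : ℕ) [Fact p.Prime] :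
    Polynomial (MvPolynomial (Fin 4) (ZMod p)) :=
  ∏ k : Fin 4 → ZMod p,
    (Polynomial.X - Polynomial.C (∑ i, MvPolynomial.C (k i) * MvPolynomial.X i))

/-- The Dickson invariant `C_{4,j}(η_1, ξ_1, η_2, ξ_2) := (−1)^{4+j} · (coefficient of
`X^{p^j}` in `f_4(X)`)`. -/
noncomputable def dicksonC4 (p : ℕ) [Fact p.Prime] (j : ℕ) :
    MvPolynomial (Fin 4) (ZMod p) :=
  (-1) ^ (4 + j) * (dicksonF4 p).coeff (p ^ j)

/-!
Write `v = (η_1, ξ_1, η_2, ξ_2)`, `v⁽ʲ⁾` for its coordinatewise `p^j`-th power and `ω` for the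
standard symplectic form on `R⁴`. Frobenius gives `r_i^{p^j} = ω(v⁽ʲ⁾, v⁽ⁱ⁺ʲ⁾)`, so `R_j(r)` is the
Pfaffian of the Gram matrix of `ω` on the four vectors `v⁽ⁱ⁾`, `i ∈ {0,…,4} \ {j}`, i.e. their
determinant. Cramer's rule for the five vectors `v⁽⁰⁾, …, v⁽⁴⁾` in dimension four then says that the
`p`-polynomial `g(T) = ∑ (-1)^j R_j(r) T^{p^j}` vanishes at every `F_p`-linear combination of the
variables, i.e. at the `p⁴` distinct roots of `f_4`. As `deg g ≤ p⁴` and the `T^{p⁴}`-coefficient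
of `g` is `R_4(r)`, we get `g = R_4(r) f_4`; compare the coefficients of `T^{p^j}`.
-/

namespace Polynomial

theorem eq_C_coeff_mul_prod_X_sub_C {R ι : Type*} [CommRing R] [IsDomain R] [Fintype ι]
    {a : ι → R} (ha : Function.Injective a) {g : R[X]}
    (hg : g.natDegree ≤ Fintype.card ι) (hroot : ∀ i, g.eval (a i) = 0) :
    g = C (g.coeff (Fintype.card ι)) * ∏ i, (X - C (a i)) := by
  set n := Fintype.card ι
  set f : R[X] := ∏ i, (X - C (a i))
  have hf : f.Monic := monic_prod_of_monic _ _ fun i _ => monic_X_sub_C (a i)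
  have hfdeg : f.natDegree = n := by
    simp [f, natDegree_prod_of_monic _ _ fun i _ => monic_X_sub_C (a i), n]
  rw [← sub_eq_zero]
  set h := g - C (g.coeff n) * f
  by_contra hne
  have hcoeff : h.coeff n = 0 := by
    rw [coeff_sub, coeff_C_mul, ← hfdeg, hf.coeff_natDegree, mul_one, sub_self]
  have hle : h.natDegree ≤ n :=
    (natDegree_sub_le _ _).trans
      (max_le hg ((natDegree_C_mul_le _ _).trans hfdeg.le))
  have hlt : h.natDegree < n :=
    hle.lt_of_ne fun heq => hne (leadingCoeff_eq_zero.mp (by rwa [leadingCoeff, heq]))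
  refine hne (eq_zero_of_natDegree_lt_card_of_eval_eq_zero h ha (fun i => ?_) hlt)
  simp [h, f, hroot i, eval_prod, Finset.prod_eq_zero (Finset.mem_univ i)]

section Linearized

variable {R : Type*} [Semiring R]

noncomputable def linearized (q n : ℕ) (c : ℕ → R) : R[X] :=
  ∑ j ∈ Finset.range (n + 1), C (c j) * X ^ q ^ j

variable {q n : ℕ} (c : ℕ → R)

theorem natDegree_linearized_le (hq : 0 < q) : (linearized q n c).natDegree ≤ q ^ n :=
  natDegree_sum_le_of_forall_le _ _ fun _ hj =>
    (natDegree_C_mul_X_pow_le _ _).trans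
      (Nat.pow_le_pow_right hq (Nat.lt_succ_iff.mp (Finset.mem_range.mp hj)))

theorem coeff_linearized_pow (hq : 1 < q) {j : ℕ} (hj : j ≤ n) :
    (linearized q n c).coeff (q ^ j) = c j := by
  simp [linearized, Nat.pow_right_injective hq |>.eq_iff, Nat.lt_succ_iff.mpr hj]

theorem eval_linearized {R : Type*} [CommSemiring R] (c : ℕ → R) (a : R) :
    (linearized q n c).eval a = ∑ j ∈ Finset.range (n + 1), c j * a ^ q ^ j := by
  simp [linearized, eval_finsetSum]

end Linearized

end Polynomial

section Pfaffian

variable {R : Type*} [CommRing R]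

def symplecticForm (u w : Fin 4 → R) : R :=
  u 0 * w 1 - u 1 * w 0 + u 2 * w 3 - u 3 * w 2

def pfaffian (v : ℕ → Fin 4 → R) (a b c d : ℕ) : R :=
  symplecticForm (v a) (v b) * symplecticForm (v c) (v d)
    - symplecticForm (v a) (v c) * symplecticForm (v b) (v d)
    + symplecticForm (v a) (v d) * symplecticForm (v b) (v c)

-- `pfaffian v a b c d` is the determinant of `v a, v b, v c, v d`: this is Cramer's rule.
theorem pfaffian_cramer (v : ℕ → Fin 4 → R) :
    pfaffian v 1 2 3 4 • v 0 - pfaffian v 0 2 3 4 • v 1 + pfaffian v 0 1 3 4 • v 2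
      - pfaffian v 0 1 2 4 • v 3 + pfaffian v 0 1 2 3 • v 4 = 0 := by
  funext i
  fin_cases i <;> simp [pfaffian, symplecticForm] <;> ring

theorem symplecticForm_pow_expChar_pow (p : ℕ) [ExpChar R p] (u w : Fin 4 → R) (n : ℕ) :
    symplecticForm u w ^ p ^ n = symplecticForm (u ^ p ^ n) (w ^ p ^ n) := by
  simp only [symplecticForm, sub_pow_expChar_pow, add_pow_expChar_pow, mul_pow, Pi.pow_apply]

theorem symplecticForm_pow_expChar (p : ℕ) [ExpChar R p] (u w : Fin 4 → R) :
    symplecticForm u w ^ p = symplecticForm (u ^ p) (w ^ p) := by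
  simpa using symplecticForm_pow_expChar_pow p u w 1

end Pfaffian

section Twist

variable (p : ℕ)

noncomputable def frobTwist (j : ℕ) : Fin 4 → MvPolynomial (Fin 4) (ZMod p) :=
  fun i => X i ^ p ^ j

theorem frobTwist_pow (i j : ℕ) : frobTwist p i ^ p ^ j = frobTwist p (i + j) := by
  funext k
  simp [frobTwist, ← pow_mul, pow_add]

theorem frobTwist_pow_char (i : ℕ) : frobTwist p i ^ p = frobTwist p (i + 1) := by
  simpa using frobTwist_pow p i 1

theorem rElt_eq_symplecticForm (i : ℕ) :
    rElt p i = symplecticForm (frobTwist p 0) (frobTwist p i) := by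
  simp only [rElt, symplecticForm, frobTwist, pow_zero, pow_one]
  ring

noncomputable def RpolyAtR (j : ℕ) : MvPolynomial (Fin 4) (ZMod p) :=
  aeval (fun i : Fin 4 => rElt p ((i : ℕ) + 1)) (Rpoly p j)

variable [Fact p.Prime]

theorem RpolyAtR_eq_pfaffian :
    RpolyAtR p 0 = pfaffian (frobTwist p) 1 2 3 4 ∧
      RpolyAtR p 1 = pfaffian (frobTwist p) 0 2 3 4 ∧
      RpolyAtR p 2 = pfaffian (frobTwist p) 0 1 3 4 ∧
      RpolyAtR p 3 = pfaffian (frobTwist p) 0 1 2 4 ∧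
      RpolyAtR p 4 = pfaffian (frobTwist p) 0 1 2 3 := by
  refine ⟨?_, ?_, ?_, ?_, ?_⟩ <;>
  · simp only [RpolyAtR, Rpoly, map_add, map_sub, map_mul, map_pow, aeval_X, Fin.isValue,
      Fin.coe_ofNat_eq_mod, Nat.zero_mod, Nat.one_mod, Nat.reduceMod, Nat.mod_succ, zero_add,
      Nat.reduceAdd, pow_add, pow_one, rElt_eq_symplecticForm, symplecticForm_pow_expChar_pow,
      symplecticForm_pow_expChar, frobTwist_pow, frobTwist_pow_char, pfaffian]
    ring

theorem sum_neg_one_pow_mul_RpolyAtR_smul_frobTwist :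
    ∑ j ∈ Finset.range 5, ((-1) ^ j * RpolyAtR p j) • frobTwist p j = 0 := by
  obtain ⟨h0, h1, h2, h3, h4⟩ := RpolyAtR_eq_pfaffian p
  rw [← pfaffian_cramer (frobTwist p)]
  simp only [Finset.sum_range_succ, Finset.sum_range_zero, h0, h1, h2, h3, h4]
  module

end Twist

section Dickson

variable (p : ℕ)

noncomputable def linearForm (k : Fin 4 → ZMod p) : MvPolynomial (Fin 4) (ZMod p) :=
  ∑ i, C (k i) * X i

theorem linearForm_injective : Function.Injective (linearForm p) := by
  intro k k' h
  funext i
  simpa [linearForm, coeff_sum, coeff_C_mul, coeff_X, Finsupp.single_left_inj] using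
    congrArg (coeff (Finsupp.single i 1)) h

variable [Fact p.Prime]

theorem linearForm_pow (k : Fin 4 → ZMod p) (j : ℕ) :
    linearForm p k ^ p ^ j = ∑ i, C (k i) * frobTwist p j i := by
  simp [linearForm, sum_pow_char_pow, mul_pow, ← map_pow, ZMod.pow_card_pow, frobTwist]

theorem eval_linearForm_linearized (k : Fin 4 → ZMod p) :
    (Polynomial.linearized p 4 fun j => (-1) ^ j * RpolyAtR p j).eval (linearForm p k) = 0 := by
  have hvanish := sum_neg_one_pow_mul_RpolyAtR_smul_frobTwist p
  simp only [Polynomial.eval_linearized, linearForm_pow, Finset.mul_sum]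
  rw [Finset.sum_comm]
  refine Finset.sum_eq_zero fun i _ => ?_
  have hi := congrFun hvanish i
  simp only [Finset.sum_apply, Pi.smul_apply, smul_eq_mul, Pi.zero_apply] at hi
  calc _ = C (k i) * ∑ j ∈ Finset.range 5, (-1) ^ j * RpolyAtR p j * frobTwist p j i := by
        rw [Finset.mul_sum]
        exact Finset.sum_congr rfl fun j _ => by ring
    _ = 0 := by rw [hi, mul_zero]

theorem C_RpolyAtR_four_mul_dicksonF4 :
    Polynomial.C (RpolyAtR p 4) * dicksonF4 p =
      Polynomial.linearized p 4 fun j => (-1) ^ j * RpolyAtR p j := by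
  have hp : p.Prime := Fact.out
  have hcard : Fintype.card (Fin 4 → ZMod p) = p ^ 4 := by simp
  have hdeg :=
    Polynomial.natDegree_linearized_le (fun j => (-1) ^ j * RpolyAtR p j) (n := 4) hp.pos
  rw [← hcard] at hdeg
  have h := Polynomial.eq_C_coeff_mul_prod_X_sub_C (linearForm_injective p) hdeg
    (eval_linearForm_linearized p)
  rw [hcard, Polynomial.coeff_linearized_pow _ hp.one_lt le_rfl, Even.neg_one_pow (by decide),
    one_mul] at h
  exact h.symm

theorem RpolyAtR_eq_dicksonC4_mul {j : ℕ} (hj : j ≤ 4) :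
    RpolyAtR p j = dicksonC4 p j * RpolyAtR p 4 := by
  have h := congrArg (Polynomial.coeff · (p ^ j)) (C_RpolyAtR_four_mul_dicksonF4 p)
  simp only [Polynomial.coeff_C_mul,
    Polynomial.coeff_linearized_pow _ (Fact.out : p.Prime).one_lt hj] at h
  have hsq : ((-1) ^ j * (-1) ^ j : MvPolynomial (Fin 4) (ZMod p)) = 1 := by
    rw [← mul_pow, neg_one_mul, neg_neg, one_pow]
  rw [dicksonC4, pow_add]
  linear_combination (-(-1) ^ j) * h - RpolyAtR p j * hsq

end Dickson

theorem Rpoly_eval_eq_dicksonC4_mul_general (p : ℕ) [Fact p.Prime] :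
    (∀ j ≤ 4,
        MvPolynomial.aeval (fun i : Fin 4 => rElt p ((i : ℕ) + 1)) (Rpoly p j) =
          dicksonC4 p j *
            MvPolynomial.aeval (fun i : Fin 4 => rElt p ((i : ℕ) + 1)) (Rpoly p 4)) ∧
      rElt p 1 ^ p * rElt p 4 + rElt p 1 * rElt p 2 ^ p ^ 2 - rElt p 2 * rElt p 3 ^ p =
        dicksonC4 p 3 *
          (rElt p 1 ^ (p ^ 2 + 1) - rElt p 2 ^ (p + 1) + rElt p 1 ^ p * rElt p 3) := by
  refine ⟨fun j hj => RpolyAtR_eq_dicksonC4_mul p hj, ?_⟩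
  have h3 := RpolyAtR_eq_dicksonC4_mul p (j := 3) (by norm_num)
  simp only [RpolyAtR, Rpoly, map_add, map_sub, map_mul, map_pow, aeval_X, Fin.isValue,
    Fin.coe_ofNat_eq_mod, Nat.zero_mod, Nat.one_mod, Nat.reduceMod, Nat.mod_succ, zero_add,
    Nat.reduceAdd] at h3
  linear_combination h3

/-- for every `0 ≤ j ≤ 4`,
`R_j(r_1, r_2, r_3, r_4) = C_{4,j}(η_1, ξ_1, η_2, ξ_2) · R_4(r_1, r_2, r_3, r_4)`;
in particular (`j = 3`):
`r_1^p r_4 + r_1 r_2^{p²} − r_2 r_3^p = C_{4,3} · (r_1^{p²+1} − r_2^{p+1} + r_1^p r_3)`. -/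
theorem Rpoly_eval_eq_dicksonC4_mul (p : ℕ) [Fact p.Prime] (hodd : Odd p) :
    (∀ j ≤ 4,
        MvPolynomial.aeval (fun i : Fin 4 => rElt p ((i : ℕ) + 1)) (Rpoly p j) =
          dicksonC4 p j *
            MvPolynomial.aeval (fun i : Fin 4 => rElt p ((i : ℕ) + 1)) (Rpoly p 4)) ∧
      rElt p 1 ^ p * rElt p 4 + rElt p 1 * rElt p 2 ^ p ^ 2 - rElt p 2 * rElt p 3 ^ p =
        dicksonC4 p 3 *
          (rElt p 1 ^ (p ^ 2 + 1) - rElt p 2 ^ (p + 1) + rElt p 1 ^ p * rElt p 3) :=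
  Rpoly_eval_eq_dicksonC4_mul_general p
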